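/- arXiv:2603.03741 — 2 statements merged into one kernel-verified Lean document; each statement's English description precedes it below -/
import Mathlib

section
/- Let E be a real inner product space, let V : E → ℝ be differentiable with gradient ∇V that is L-Lipschitz, i.e., ‖∇V(θ₁) − ∇V(θ₂)‖ ≤ L‖θ₁ − θ₂‖ for all θ₁, θ₂ ∈ E. Let σ > 0, θ ∈ E, and d ∈ E satisfy ⟪∇V(θ), d⟫ ≤ −σ·V(θ). Then for every step size η ≥ 0, the update θ' = θ + η • d satisfies V(θ') − V(θ) ≤ −η·σ·V(θ) + (L·η²/2)·‖d‖². -/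
open RealInnerProductSpace

/-!
Along the ray `t ↦ θ + t • d` the derivative of `V` is `⟪V' (θ + t • d), d⟫`, which the
Lipschitz bound on `V'` keeps below `⟪V' θ, d⟫ + L t ‖d‖²`, the derivative of the quadratic
`V θ + t ⟪V' θ, d⟫ + (L t² / 2) ‖d‖²`. Both agree at `t = 0`, so the comparison principle gives
the descent lemma at `t = η`; the certificate then bounds the linear term by `-η σ V θ`.
-/

section DescentLemma

variable {E : Type*} [NormedAddCommGroup E] [InnerProductSpace ℝ E]
  {V : E → ℝ} {V' : E → E} {L : ℝ}

theorem hasDerivAt_comp_add_smul_of_gradient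
    (hV : ∀ x, HasFDerivAt V (InnerProductSpace.toDualMap ℝ E (V' x)) x) (θ d : E) (t : ℝ) :
    HasDerivAt (fun t : ℝ => V (θ + t • d)) ⟪V' (θ + t • d), d⟫ t := by
  have hray : HasDerivAt (fun t : ℝ => θ + t • d) d t := by
    simpa using ((hasDerivAt_id t).smul_const d).const_add θ
  exact (hV (θ + t • d)).comp_hasDerivAt t hray

theorem inner_add_smul_le_of_lipschitz
    (hlip : ∀ x y, ‖V' x - V' y‖ ≤ L * ‖x - y‖) (θ d : E) {t : ℝ} (ht : 0 ≤ t) :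
    ⟪V' (θ + t • d), d⟫ ≤ ⟪V' θ, d⟫ + L * t * ‖d‖ ^ 2 := by
  have hstep : ‖V' (θ + t • d) - V' θ‖ ≤ L * (t * ‖d‖) := by
    simpa [norm_smul, abs_of_nonneg ht] using hlip (θ + t • d) θ
  calc ⟪V' (θ + t • d), d⟫ = ⟪V' θ, d⟫ + ⟪V' (θ + t • d) - V' θ, d⟫ := by
        rw [inner_sub_left]; ring
    _ ≤ ⟪V' θ, d⟫ + ‖V' (θ + t • d) - V' θ‖ * ‖d‖ := by gcongr; exact real_inner_le_norm _ _
    _ ≤ ⟪V' θ, d⟫ + L * (t * ‖d‖) * ‖d‖ := by gcongr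
    _ = ⟪V' θ, d⟫ + L * t * ‖d‖ ^ 2 := by ring

theorem sub_le_of_lipschitz_gradient
    (hV : ∀ x, HasFDerivAt V (InnerProductSpace.toDualMap ℝ E (V' x)) x)
    (hlip : ∀ x y, ‖V' x - V' y‖ ≤ L * ‖x - y‖) (θ d : E) {η : ℝ} (hη : 0 ≤ η) :
    V (θ + η • d) - V θ ≤ η * ⟪V' θ, d⟫ + (L * η ^ 2 / 2) * ‖d‖ ^ 2 := by
  set B : ℝ → ℝ := fun t => V θ + t * ⟪V' θ, d⟫ + (L * t ^ 2 / 2) * ‖d‖ ^ 2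
  have hB : ∀ t, HasDerivAt B (⟪V' θ, d⟫ + L * t * ‖d‖ ^ 2) t := fun t => by
    refine ((((hasDerivAt_id t).mul_const ⟪V' θ, d⟫).const_add (V θ)).add
      ((((hasDerivAt_pow 2 t).const_mul L).div_const 2).mul_const (‖d‖ ^ 2))).congr_deriv ?_
    ring
  have hf := hasDerivAt_comp_add_smul_of_gradient hV θ d
  have hcomp := image_le_of_deriv_right_le_deriv_boundary (a := 0) (b := η)
    (fun t _ => (hf t).continuousAt.continuousWithinAt) (fun t _ => (hf t).hasDerivWithinAt)
    (by simp [B]) (fun t _ => (hB t).continuousAt.continuousWithinAt)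
    (fun t _ => (hB t).hasDerivWithinAt)
    (fun t ht => inner_add_smul_le_of_lipschitz hlip θ d ht.1) ⟨hη, le_rfl⟩
  simp only [B] at hcomp
  linarith

end DescentLemma

theorem halypo_descent_inequality_general
    {E : Type*} [NormedAddCommGroup E] [InnerProductSpace ℝ E]
    (V : E → ℝ) (V' : E → E) (L : ℝ)
    (hdiff : ∀ θ : E, HasFDerivAt V (InnerProductSpace.toDualMap ℝ E (V' θ)) θ)
    (hlip : ∀ θ₁ θ₂ : E, ‖V' θ₁ - V' θ₂‖ ≤ L * ‖θ₁ - θ₂‖)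
    (σ : ℝ) (θ d : E)
    (hd : ⟪V' θ, d⟫ ≤ -(σ * V θ))
    (η : ℝ) (hη : 0 ≤ η) :
    V (θ + η • d) - V θ ≤ -(η * σ * V θ) + (L * η ^ 2 / 2) * ‖d‖ ^ 2 := by
  have hdescent := sub_le_of_lipschitz_gradient hdiff hlip θ d hη
  have hlinear : η * ⟪V' θ, d⟫ ≤ η * -(σ * V θ) := mul_le_mul_of_nonneg_left hd hη
  linarith

/-- Descent inequality: if `V` has gradient field `V'` that is `L`-Lipschitz,
`σ > 0`, and the direction `d` satisfies the Lyapunov certificate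
`⟪V'(θ), d⟫ ≤ -σ·V(θ)`, then for every step size `η ≥ 0` the update
`θ' = θ + η • d` satisfies `V(θ') - V(θ) ≤ -η·σ·V(θ) + (L·η²/2)·‖d‖²`. -/
theorem halypo_descent_inequality
    {E : Type*} [NormedAddCommGroup E] [InnerProductSpace ℝ E]
    (V : E → ℝ) (V' : E → E) (L : ℝ)
    (hdiff : ∀ θ : E, HasFDerivAt V (InnerProductSpace.toDualMap ℝ E (V' θ)) θ)
    (hlip : ∀ θ₁ θ₂ : E, ‖V' θ₁ - V' θ₂‖ ≤ L * ‖θ₁ - θ₂‖)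
    (σ : ℝ) (hσ : 0 < σ) (θ d : E)
    (hd : ⟪V' θ, d⟫ ≤ -(σ * V θ))
    (η : ℝ) (hη : 0 ≤ η) :
    V (θ + η • d) - V θ ≤ -(η * σ * V θ) + (L * η ^ 2 / 2) * ‖d‖ ^ 2 :=
  halypo_descent_inequality_general V V' L hdiff hlip σ θ d hd η hη
end

section
/- Let E be a real inner product space, let V : E → ℝ be differentiable with L-Lipschitz gradient (L > 0), let σ > 0, θ ∈ E with V(θ) ≥ 0, and let d ∈ E with d ≠ 0 satisfy ⟪∇V(θ), d⟫ ≤ −σ·V(θ). If the step size η ≥ 0 satisfies η ≤ 2σ·V(θ)/(L·‖d‖²), then the update θ' = θ + η • d satisfies V(θ') ≤ V(θ); that is, the Lyapunov potential is non-increasing under the HALyPO step-size bound. -/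
open RealInnerProductSpace

/-!
Along the ray `t ↦ θ + t • d` the directional derivative `⟪V' (θ + t • d), d⟫` drifts from its
initial value by at most `L * ‖d‖ ^ 2 * t`, so `V` lies below its quadratic upper model
(the descent lemma). At step `η` the model's decrease `η * σ * V θ` coming from the certificate
dominates its curvature term `L / 2 * η ^ 2 * ‖d‖ ^ 2` exactly when `η ≤ 2 * σ * V θ / (L * ‖d‖ ^ 2)`.
-/

section DescentLemma

variable {E : Type*} [NormedAddCommGroup E] [InnerProductSpace ℝ E] {f : E → ℝ} {f' : E → E}
  {L : ℝ}

lemma hasDerivAt_comp_add_smul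
    (hf : ∀ x, HasFDerivAt f (InnerProductSpace.toDualMap ℝ E (f' x)) x) (x y : E) (t : ℝ) :
    HasDerivAt (fun s : ℝ => f (x + s • y)) ⟪f' (x + t • y), y⟫ t := by
  have hline : HasDerivAt (fun s : ℝ => x + s • y) y t := by
    simpa using ((hasDerivAt_id t).smul_const y).const_add x
  simpa [Function.comp_def] using (hf (x + t • y)).comp_hasDerivAt t hline

lemma inner_sub_inner_le_of_lipschitz (hlip : ∀ a b : E, ‖f' a - f' b‖ ≤ L * ‖a - b‖)
    (x y : E) {t : ℝ} (ht : 0 ≤ t) :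
    ⟪f' (x + t • y), y⟫ - ⟪f' x, y⟫ ≤ L * ‖y‖ ^ 2 * t :=
  calc ⟪f' (x + t • y), y⟫ - ⟪f' x, y⟫ = ⟪f' (x + t • y) - f' x, y⟫ := (inner_sub_left ..).symm
    _ ≤ ‖f' (x + t • y) - f' x‖ * ‖y‖ := real_inner_le_norm _ _
    _ ≤ L * ‖(x + t • y) - x‖ * ‖y‖ := by gcongr; exact hlip _ _
    _ = L * ‖y‖ ^ 2 * t := by
      rw [add_sub_cancel_left, norm_smul, Real.norm_of_nonneg ht]; ring

theorem le_add_inner_add_of_lipschitz_gradient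
    (hf : ∀ x, HasFDerivAt f (InnerProductSpace.toDualMap ℝ E (f' x)) x)
    (hlip : ∀ a b : E, ‖f' a - f' b‖ ≤ L * ‖a - b‖) (x y : E) :
    f (x + y) ≤ f x + ⟪f' x, y⟫ + L / 2 * ‖y‖ ^ 2 := by
  set gap : ℝ → ℝ := fun t => f (x + t • y) - (t * ⟪f' x, y⟫ + L / 2 * ‖y‖ ^ 2 * t ^ 2)
  have hgap : ∀ t, HasDerivAt gap
      (⟪f' (x + t • y), y⟫ - (⟪f' x, y⟫ + L * ‖y‖ ^ 2 * t)) t := fun t => by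
    have hmodel : HasDerivAt (fun s : ℝ => s * ⟪f' x, y⟫ + L / 2 * ‖y‖ ^ 2 * s ^ 2)
        (⟪f' x, y⟫ + L * ‖y‖ ^ 2 * t) t :=
      (((hasDerivAt_id t).mul_const _).add ((hasDerivAt_pow 2 t).const_mul _)).congr_deriv
        (by simp only [Nat.cast_ofNat]; ring)
    exact (hasDerivAt_comp_add_smul hf x y t).sub hmodel
  have hanti : AntitoneOn gap (Set.Ici 0) := by
    refine antitoneOn_of_hasDerivWithinAt_nonpos (convex_Ici 0)
      (fun t _ => (hgap t).continuousAt.continuousWithinAt)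
      (fun t _ => (hgap t).hasDerivWithinAt) fun t ht => ?_
    rw [interior_Ici] at ht
    linarith [inner_sub_inner_le_of_lipschitz hlip x y ht.le]
  have hgap01 : gap 1 ≤ gap 0 := hanti Set.self_mem_Ici (Set.mem_Ici.2 zero_le_one) zero_le_one
  simp only [gap, zero_smul, one_smul, add_zero] at hgap01
  linarith

end DescentLemma

theorem halypo_monotone_decrease_general
    {E : Type*} [NormedAddCommGroup E] [InnerProductSpace ℝ E]
    (V : E → ℝ) (V' : E → E) (L : ℝ) (hL : 0 < L)
    (hdiff : ∀ θ : E, HasFDerivAt V (InnerProductSpace.toDualMap ℝ E (V' θ)) θ)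
    (hlip : ∀ θ₁ θ₂ : E, ‖V' θ₁ - V' θ₂‖ ≤ L * ‖θ₁ - θ₂‖)
    (σ : ℝ) (θ : E) (d : E) (hd0 : d ≠ 0)
    (hd : ⟪V' θ, d⟫ ≤ -(σ * V θ))
    (η : ℝ) (hη : 0 ≤ η) (hηbound : η ≤ 2 * σ * V θ / (L * ‖d‖ ^ 2)) :
    V (θ + η • d) ≤ V θ := by
  have hcurv : 0 < L * ‖d‖ ^ 2 := by positivity
  have hstep : η * (L * ‖d‖ ^ 2) ≤ 2 * σ * V θ := (le_div_iff₀ hcurv).1 hηbound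
  have hdescent := le_add_inner_add_of_lipschitz_gradient hdiff hlip θ (η • d)
  rw [inner_smul_right, norm_smul, Real.norm_of_nonneg hη] at hdescent
  nlinarith [mul_le_mul_of_nonneg_left hd hη, mul_le_mul_of_nonneg_left hstep hη]

/-- Monotonic non-increase of the Lyapunov potential under the HALyPO
step-size bound `η ≤ 2σ·V(θ)/(L·‖d‖²)`. -/
theorem halypo_monotone_decrease
    {E : Type*} [NormedAddCommGroup E] [InnerProductSpace ℝ E]
    (V : E → ℝ) (V' : E → E) (L : ℝ) (hL : 0 < L)
    (hdiff : ∀ θ : E, HasFDerivAt V (InnerProductSpace.toDualMap ℝ E (V' θ)) θ)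
    (hlip : ∀ θ₁ θ₂ : E, ‖V' θ₁ - V' θ₂‖ ≤ L * ‖θ₁ - θ₂‖)
    (σ : ℝ) (hσ : 0 < σ) (θ : E) (hV : 0 ≤ V θ) (d : E) (hd0 : d ≠ 0)
    (hd : ⟪V' θ, d⟫ ≤ -(σ * V θ))
    (η : ℝ) (hη : 0 ≤ η) (hηbound : η ≤ 2 * σ * V θ / (L * ‖d‖ ^ 2)) :
    V (θ + η • d) ≤ V θ :=
  halypo_monotone_decrease_general V V' L hL hdiff hlip σ θ d hd0 hd η hη hηbound
end
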